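/- arXiv:2208.06648 — 2 statements merged into one kernel-verified Lean document; each statement's English description precedes it below -/
import Mathlib

section
/- Population mean imputation reconstruction error (Theorem 1, second part): L_g^{pop} = ( B_g^{group} + μ_g^O − μ^O )² + Var(X | {O=0} ∩ G), where B_g^{group} = E[X | {O=0} ∩ G] − μ_g^O = −ρ_g σ_{X|G}/√(α_g(1−α_g)); i.e. the population mean reconstruction error in group g equals the square of the group imputation bias shifted by the difference between the group-observed and population-observed means, plus the variance of the unobserved data in group g. -/
/-!
Write `O` as the indicator of `S = {O = 1}` and put `p = μ(S | G)`. Splitting `E[X | G]` over `S`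
and `Sᶜ` gives `Cov(O, X | G) = p (1 - p) (E[X | S ∩ G] - E[X | Sᶜ ∩ G])`, and dividing by
`σ_{O|G} σ_{X|G} = √(p (1 - p)) σ_{X|G}` yields the formula for `B_g^group`. The error formula is
the bias–variance decomposition `E[(c - X)²] = (c - E[X])² + Var X` under `μ(· | Sᶜ ∩ G)`.
-/

open MeasureTheory ProbabilityTheory

/-- Covariance of two real random variables under the measure `μ`. -/
noncomputable def condCov {Ω : Type*} [MeasurableSpace Ω] (μ : Measure Ω) (O X : Ω → ℝ) : ℝ :=
  ∫ ω, (O ω - ∫ x, O x ∂μ) * (X ω - ∫ x, X x ∂μ) ∂μ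

namespace ProbabilityTheory

variable {Ω : Type*} [MeasurableSpace Ω] {μ : Measure Ω} {X : Ω → ℝ} {s : Set Ω}

lemma _root_.MeasureTheory.MemLp.cond {p : ENNReal} (hX : MemLp X p μ) (hs : μ s ≠ 0) :
    MemLp X p μ[|s] :=
  (hX.restrict s).smul_measure (ENNReal.inv_ne_top.mpr hs)

lemma measureReal_mul_integral_cond [IsFiniteMeasure μ] (f : Ω → ℝ) (s : Set Ω) :
    μ.real s * ∫ ω, f ω ∂μ[|s] = ∫ ω in s, f ω ∂μ := by
  rcases eq_or_ne (μ s) 0 with hs | hs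
  · simp [Measure.restrict_eq_zero.mpr hs, Measure.real, hs]
  · rw [cond, integral_smul_measure, ENNReal.toReal_inv, smul_eq_mul, ← mul_assoc,
      Measure.real, mul_inv_cancel₀ (ENNReal.toReal_ne_zero.mpr ⟨hs, measure_ne_top μ s⟩),
      one_mul]

lemma integral_const_sub_sq [IsProbabilityMeasure μ] (hX : MemLp X 2 μ) (c : ℝ) :
    ∫ ω, (c - X ω) ^ 2 ∂μ = (c - μ[X]) ^ 2 + Var[X; μ] := by
  rw [← variance_const_sub hX.1 c,
    variance_eq_sub (X := fun ω ↦ c - X ω) ((memLp_const c).sub hX),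
    integral_sub (integrable_const c) (hX.integrable one_le_two)]
  simp

lemma covariance_indicator_one_left [IsProbabilityMeasure μ] (hs : MeasurableSet s)
    (hX : MemLp X 2 μ) :
    cov[s.indicator 1, X; μ] = μ.real s * μ.real sᶜ * (μ[|s][X] - μ[|sᶜ][X]) := by
  have hind : s.indicator 1 * X = s.indicator X := by
    ext ω; by_cases h : ω ∈ s <;> simp [h]
  rw [covariance_eq_sub (X := s.indicator 1) ((memLp_const 1).indicator hs) hX, hind,
    integral_indicator hs, integral_indicator_one hs,
    ← integral_add_compl hs (hX.integrable one_le_two),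
    ← measureReal_mul_integral_cond, ← measureReal_mul_integral_cond,
    probReal_compl_eq_one_sub hs]
  ring

end ProbabilityTheory

theorem population_mean_imputation_error_general
    {Ω : Type*} [MeasurableSpace Ω] (μ : Measure Ω) [IsProbabilityMeasure μ]
    (X O : Ω → ℝ) (G : Set Ω)
    (hOm : Measurable O) (hG : MeasurableSet G)
    (hX2 : MemLp X 2 μ)
    (hO01 : ∀ ω, O ω = 0 ∨ O ω = 1)
    (αg σXG ρg μgO μO BgGroup : ℝ)
    (hαg : αg = ∫ ω, O ω ∂(μ[|G]))
    (hρg : ρg = condCov (μ[|G]) O X / (Real.sqrt (αg * (1 - αg)) * σXG))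
    (hμgO : μgO = ∫ ω, X ω ∂(μ[|O ⁻¹' {1} ∩ G]))
    (hBg : BgGroup = (∫ ω, X ω ∂(μ[|O ⁻¹' {0} ∩ G])) - μgO)
    (hα0 : 0 < αg) (hα1 : αg < 1) (hσpos : 0 < σXG)
    (hpos0 : 0 < μ (O ⁻¹' {0} ∩ G)) :
    (∫ ω, (μO - X ω) ^ 2 ∂(μ[|O ⁻¹' {0} ∩ G])) =
        (BgGroup + μgO - μO) ^ 2 + variance X (μ[|O ⁻¹' {0} ∩ G]) ∧
    BgGroup = -(ρg * σXG) / Real.sqrt (αg * (1 - αg)) := by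
  set S := O ⁻¹' {1}
  have hS : MeasurableSet S := hOm (measurableSet_singleton 1)
  have hO : O = S.indicator 1 := by
    ext ω; rcases hO01 ω with h | h <;> simp [S, h]
  have hSc : O ⁻¹' {0} = Sᶜ := by
    ext ω; rcases hO01 ω with h | h <;> simp [S, h]
  rw [hSc] at hBg hpos0 ⊢
  have hG0 : μ G ≠ 0 := (hpos0.trans_le (measure_mono Set.inter_subset_right)).ne'
  have := cond_isProbabilityMeasure hG0
  have hα : αg = (μ[|G]).real S := by rw [hαg, hO, integral_indicator_one hS]
  have hcov : condCov (μ[|G]) O X = αg * (1 - αg) * (μgO - ∫ ω, X ω ∂μ[|Sᶜ ∩ G]) := by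
    change cov[O, X; μ[|G]] = _
    rw [hO, covariance_indicator_one_left hS (hX2.cond hG0), cond_cond_eq_cond_inter hG hS,
      cond_cond_eq_cond_inter hG hS.compl, Set.inter_comm, Set.inter_comm G,
      probReal_compl_eq_one_sub hS, ← hα, hμgO]
  constructor
  · have := cond_isProbabilityMeasure hpos0.ne'
    rw [integral_const_sub_sq (hX2.cond hpos0.ne') μO, hBg]
    ring
  · have hq : 0 < αg * (1 - αg) := mul_pos hα0 (sub_pos.mpr hα1)
    rw [hρg, hcov, hBg]
    field_simp
    rw [Real.sq_sqrt hq.le]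
    ring

/-- (Theorem 1, second part.) The reconstruction error of population mean
imputation in group `g` equals `(B_g^group + μ_g^O − μ^O)²` plus the variance of the unobserved
data in group `g`, where `B_g^group = E[X | {O=0} ∩ G] − μ_g^O = −ρ_g σ_{X|G}/√(α_g(1−α_g))`. -/
theorem population_mean_imputation_error
    {Ω : Type*} [MeasurableSpace Ω] (μ : Measure Ω) [IsProbabilityMeasure μ]
    (X O : Ω → ℝ) (G : Set Ω)
    (hXm : Measurable X) (hOm : Measurable O) (hG : MeasurableSet G)
    (hX2 : MemLp X 2 μ)
    (hO01 : ∀ ω, O ω = 0 ∨ O ω = 1)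
    (αg σXG ρg μgO μO BgGroup : ℝ)
    (hαg : αg = ∫ ω, O ω ∂(μ[|G]))
    (hσXG : σXG = Real.sqrt (variance X (μ[|G])))
    (hρg : ρg = condCov (μ[|G]) O X / (Real.sqrt (αg * (1 - αg)) * σXG))
    (hμgO : μgO = ∫ ω, X ω ∂(μ[|O ⁻¹' {1} ∩ G]))
    (hμO : μO = ∫ ω, X ω ∂(μ[|O ⁻¹' {1}]))
    (hBg : BgGroup = (∫ ω, X ω ∂(μ[|O ⁻¹' {0} ∩ G])) - μgO)
    (hα0 : 0 < αg) (hα1 : αg < 1) (hσpos : 0 < σXG)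
    (hpos1 : 0 < μ (O ⁻¹' {1} ∩ G)) (hpos0 : 0 < μ (O ⁻¹' {0} ∩ G))
    (hpos1' : 0 < μ (O ⁻¹' {1})) :
    (∫ ω, (μO - X ω) ^ 2 ∂(μ[|O ⁻¹' {0} ∩ G])) =
        (BgGroup + μgO - μO) ^ 2 + variance X (μ[|O ⁻¹' {0} ∩ G]) ∧
    BgGroup = -(ρg * σXG) / Real.sqrt (αg * (1 - αg)) :=
  population_mean_imputation_error_general μ X O G hOm hG hX2 hO01 αg σXG ρg μgO μO BgGroup hαg hρg
    hμgO hBg hα0 hα1 hσpos hpos0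
end

section
/- Factorized characterization of the gap comparison (intermediate step of Theorem 3): under the assumption Var(X | {O=0} ∩ G) = Var(X | {O=0} ∩ Gᶜ), the group-imputation gap exceeds the population-imputation gap, Δ^{group}_g > Δ^{pop}_g, if and only if (μ_{¬g}^O − μ^O)·(B_{¬g}^{pop} + B_{¬g}^{group}) > (μ_g^O − μ^O)·(B_g^{pop} + B_g^{group}). -/
/-!
Expanding each reconstruction error as variance plus squared bias, the two gaps share the
variance terms, which cancel by the equal-variance assumption. What remains is a difference of
squares, `(a - c)^2 - (a - d)^2 = (d - c) * ((a - d) + (a - c))`, in which `a - d` and `a - c`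
are the population and group biases, so `Δ^group - Δ^pop` is exactly the difference of the two
sides of the claimed inequality.
-/

open MeasureTheory ProbabilityTheory

section

variable {Ω : Type*} [MeasurableSpace Ω] {μ : Measure Ω} {X : Ω → ℝ}

theorem MeasureTheory.MemLp.cond_s12 {p : ENNReal} {s : Set Ω} (hX : MemLp X p μ) (hs : μ s ≠ 0) :
    MemLp X p μ[|s] :=
  (hX.restrict s).smul_measure (ENNReal.inv_ne_top.2 hs)

theorem integral_const_sub_sq_eq_variance_add [IsProbabilityMeasure μ] (hX : MemLp X 2 μ)
    (c : ℝ) : ∫ ω, (c - X ω) ^ 2 ∂μ = Var[X; μ] + (μ[X] - c) ^ 2 := by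
  have hcX : MemLp (fun ω ↦ c - X ω) 2 μ := (memLp_const c).sub hX
  have h := variance_eq_sub hcX
  rw [variance_const_sub hX.aestronglyMeasurable,
    integral_sub (integrable_const c) (hX.integrable one_le_two), integral_const] at h
  simp only [Pi.pow_apply, probReal_univ, one_smul] at h
  linarith

theorem integral_const_sub_sq_cond_eq_variance_add [IsFiniteMeasure μ] (hX : MemLp X 2 μ)
    {s : Set Ω} (hs : μ s ≠ 0) (c : ℝ) :
    ∫ ω, (c - X ω) ^ 2 ∂μ[|s] = Var[X; μ[|s]] + ((∫ ω, X ω ∂μ[|s]) - c) ^ 2 :=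
  haveI := cond_isProbabilityMeasure (μ := μ) hs
  integral_const_sub_sq_eq_variance_add (hX.cond_s12 hs) c

end

theorem gap_comparison_factorized_general
    {Ω : Type*} [MeasurableSpace Ω] (μ : Measure Ω) [IsProbabilityMeasure μ]
    (X O : Ω → ℝ) (G : Set Ω)
    (hX2 : MemLp X 2 μ)
    (μgO μngO μO LgGroup LngGroup LgPop LngPop
      BgGroup BngGroup BgPop BngPop ΔGroup ΔPop : ℝ)
    (hLgGroup : LgGroup = ∫ ω, (μgO - X ω) ^ 2 ∂(μ[|O ⁻¹' {0} ∩ G]))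
    (hLngGroup : LngGroup = ∫ ω, (μngO - X ω) ^ 2 ∂(μ[|O ⁻¹' {0} ∩ Gᶜ]))
    (hLgPop : LgPop = ∫ ω, (μO - X ω) ^ 2 ∂(μ[|O ⁻¹' {0} ∩ G]))
    (hLngPop : LngPop = ∫ ω, (μO - X ω) ^ 2 ∂(μ[|O ⁻¹' {0} ∩ Gᶜ]))
    (hBgGroup : BgGroup = (∫ ω, X ω ∂(μ[|O ⁻¹' {0} ∩ G])) - μgO)
    (hBngGroup : BngGroup = (∫ ω, X ω ∂(μ[|O ⁻¹' {0} ∩ Gᶜ])) - μngO)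
    (hBgPop : BgPop = (∫ ω, X ω ∂(μ[|O ⁻¹' {0} ∩ G])) - μO)
    (hBngPop : BngPop = (∫ ω, X ω ∂(μ[|O ⁻¹' {0} ∩ Gᶜ])) - μO)
    (hΔGroup : ΔGroup = LgGroup - LngGroup)
    (hΔPop : ΔPop = LgPop - LngPop)
    (hpos0g : 0 < μ (O ⁻¹' {0} ∩ G))
    (hpos0ng : 0 < μ (O ⁻¹' {0} ∩ Gᶜ))
    (hvar : variance X (μ[|O ⁻¹' {0} ∩ G]) = variance X (μ[|O ⁻¹' {0} ∩ Gᶜ])) :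
    ΔGroup > ΔPop ↔
      (μngO - μO) * (BngPop + BngGroup) > (μgO - μO) * (BgPop + BgGroup) := by
  have hsplit_g := integral_const_sub_sq_cond_eq_variance_add hX2 hpos0g.ne'
  have hsplit_ng := integral_const_sub_sq_cond_eq_variance_add hX2 hpos0ng.ne'
  have hgap : ΔGroup - ΔPop =
      (μngO - μO) * (BngPop + BngGroup) - (μgO - μO) * (BgPop + BgGroup) := by
    rw [hΔGroup, hΔPop, hLgGroup, hLngGroup, hLgPop, hLngPop, hsplit_g, hsplit_g, hsplit_ng,
      hsplit_ng, hvar, hBgGroup, hBngGroup, hBgPop, hBngPop]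
    ring
  rw [gt_iff_lt, gt_iff_lt, ← sub_pos, hgap, sub_pos]

/-- Factorized characterization of the gap comparison: under equal
unobserved-data variances, `Δ^group_g > Δ^pop_g` iff
`(μ_{¬g}^O − μ^O)(B_{¬g}^pop + B_{¬g}^group) > (μ_g^O − μ^O)(B_g^pop + B_g^group)`. -/
theorem gap_comparison_factorized
    {Ω : Type*} [MeasurableSpace Ω] (μ : Measure Ω) [IsProbabilityMeasure μ]
    (X O : Ω → ℝ) (G : Set Ω)
    (hXm : Measurable X) (hOm : Measurable O) (hG : MeasurableSet G)
    (hX2 : MemLp X 2 μ)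
    (hO01 : ∀ ω, O ω = 0 ∨ O ω = 1)
    (μgO μngO μO LgGroup LngGroup LgPop LngPop
      BgGroup BngGroup BgPop BngPop ΔGroup ΔPop : ℝ)
    (hμgO : μgO = ∫ ω, X ω ∂(μ[|O ⁻¹' {1} ∩ G]))
    (hμngO : μngO = ∫ ω, X ω ∂(μ[|O ⁻¹' {1} ∩ Gᶜ]))
    (hμO : μO = ∫ ω, X ω ∂(μ[|O ⁻¹' {1}]))
    (hLgGroup : LgGroup = ∫ ω, (μgO - X ω) ^ 2 ∂(μ[|O ⁻¹' {0} ∩ G]))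
    (hLngGroup : LngGroup = ∫ ω, (μngO - X ω) ^ 2 ∂(μ[|O ⁻¹' {0} ∩ Gᶜ]))
    (hLgPop : LgPop = ∫ ω, (μO - X ω) ^ 2 ∂(μ[|O ⁻¹' {0} ∩ G]))
    (hLngPop : LngPop = ∫ ω, (μO - X ω) ^ 2 ∂(μ[|O ⁻¹' {0} ∩ Gᶜ]))
    (hBgGroup : BgGroup = (∫ ω, X ω ∂(μ[|O ⁻¹' {0} ∩ G])) - μgO)
    (hBngGroup : BngGroup = (∫ ω, X ω ∂(μ[|O ⁻¹' {0} ∩ Gᶜ])) - μngO)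
    (hBgPop : BgPop = (∫ ω, X ω ∂(μ[|O ⁻¹' {0} ∩ G])) - μO)
    (hBngPop : BngPop = (∫ ω, X ω ∂(μ[|O ⁻¹' {0} ∩ Gᶜ])) - μO)
    (hΔGroup : ΔGroup = LgGroup - LngGroup)
    (hΔPop : ΔPop = LgPop - LngPop)
    (hpos1g : 0 < μ (O ⁻¹' {1} ∩ G)) (hpos0g : 0 < μ (O ⁻¹' {0} ∩ G))
    (hpos1ng : 0 < μ (O ⁻¹' {1} ∩ Gᶜ)) (hpos0ng : 0 < μ (O ⁻¹' {0} ∩ Gᶜ))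
    (hpos1 : 0 < μ (O ⁻¹' {1}))
    (hvar : variance X (μ[|O ⁻¹' {0} ∩ G]) = variance X (μ[|O ⁻¹' {0} ∩ Gᶜ])) :
    ΔGroup > ΔPop ↔
      (μngO - μO) * (BngPop + BngGroup) > (μgO - μO) * (BgPop + BgGroup) :=
  gap_comparison_factorized_general μ X O G hX2 μgO μngO μO LgGroup LngGroup LgPop LngPop BgGroup
    BngGroup BgPop BngPop ΔGroup ΔPop hLgGroup hLngGroup hLgPop hLngPop hBgGroup hBngGroup hBgPop
    hBngPop hΔGroup hΔPop hpos0g hpos0ng hvar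
end
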